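/- arXiv:1809.01236 — 2 statements merged into one kernel-verified Lean document; each statement's English description precedes it below -/
import Mathlib

section
/- Let u, v ∈ ℝ^n be vectors with nonnegative entries satisfying ‖u‖₁ = ‖v‖₁ = 1. Then max over pairs j ≠ k of the squared 2×2 determinant |u_j v_k − u_k v_j|² is at least ‖u − v‖₁² / (4 n⁵). -/
/-!
Put `d = ‖u - v‖₁` and `n = card ι`. Since `u - v` sums to zero, its positive and negative parts
each have mass `d / 2`, so some `j` has `u j - v j ≥ d / (2n)` and some `k` has
`v k - u k ≥ d / (2n)`. Some `m` has `u m + v m ≥ 2 / n`, so the larger of `u m`, `v m` is at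
least `1 / n`. If `u m ≥ v m`, the minor on `(m, k)` is
`u m * (v k - u k) + u k * (u m - v m) ≥ u m * (v k - u k) ≥ d / (2n²)`; otherwise the minor on
`(j, m)` is bounded in the same way. This gives `d ≤ 2n² |minor|`, i.e. the bound with `n⁴` in place of `n⁵`.
-/

open Finset

variable {ι : Type*} [Fintype ι] [Nonempty ι]

theorem exists_sum_le_card_mul (w : ι → ℝ) : ∃ m, ∑ i, w i ≤ Fintype.card ι * w m := by
  obtain ⟨m, hm⟩ := Finite.exists_max w
  refine ⟨m, ?_⟩
  simpa using Finset.sum_le_card_nsmul univ w (w m) fun i _ => hm i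

theorem exists_sum_abs_le_two_mul_card_mul {x : ι → ℝ} (hx : ∑ i, x i = 0) :
    ∃ j, ∑ i, |x i| ≤ 2 * Fintype.card ι * x j := by
  obtain ⟨j, hj⟩ := Finite.exists_max x
  have hxj : 0 ≤ x j := by
    have := Finset.sum_le_card_nsmul univ x (x j) fun i _ => hj i
    simp only [hx, card_univ, nsmul_eq_mul] at this
    exact nonneg_of_mul_nonneg_right this (by positivity)
  have hpos : ∑ i, max (x i) 0 ≤ Fintype.card ι * x j := by
    simpa using Finset.sum_le_card_nsmul univ _ (x j) fun i _ => max_le (hj i) hxj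
  -- `|t| = 2 max t 0 - t`, and the `- t` terms cancel because `∑ x = 0`
  have habs : ∑ i, |x i| = 2 * ∑ i, max (x i) 0 := by
    have h2max : ∀ t : ℝ, |t| = 2 * max t 0 - t := fun t => by
      rcases le_total t 0 with h | h
      · rw [abs_of_nonpos h, max_eq_right h]; ring
      · rw [abs_of_nonneg h, max_eq_left h]; ring
    simp only [h2max, sum_sub_distrib, ← mul_sum, hx, sub_zero]
  refine ⟨j, ?_⟩
  linarith

theorem le_two_mul_sq_mul_minor {N a b c d D : ℝ} (ha : 1 ≤ N * a) (hba : b ≤ a) (hc : 0 ≤ c)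
    (hD : 0 ≤ D) (hDdc : D ≤ 2 * N * (d - c)) : D ≤ 2 * N ^ 2 * (a * d - c * b) := by
  have hdc : 0 ≤ 2 * N * (d - c) := hD.trans hDdc
  calc D ≤ N * a * (2 * N * (d - c)) := hDdc.trans (le_mul_of_one_le_left hdc ha)
    _ = 2 * N ^ 2 * (a * (d - c)) := by ring
    _ ≤ 2 * N ^ 2 * (a * d - c * b) := by
      gcongr
      nlinarith

theorem exists_sum_abs_sub_le_two_mul_card_sq_mul_abs_minor {u v : ι → ℝ}
    (hu : ∀ i, 0 ≤ u i) (hv : ∀ i, 0 ≤ v i) (hu1 : ∑ i, u i = 1) (hv1 : ∑ i, v i = 1) :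
    ∃ j k, ∑ i, |u i - v i| ≤ 2 * (Fintype.card ι : ℝ) ^ 2 * |u j * v k - u k * v j| := by
  suffices ∃ j k, ∑ i, |u i - v i| ≤ 2 * (Fintype.card ι : ℝ) ^ 2 * (u j * v k - u k * v j) from
    this.imp fun j => Exists.imp fun k h => h.trans (by gcongr; exact le_abs_self _)
  have hN : (0 : ℝ) ≤ Fintype.card ι := Nat.cast_nonneg _
  have hD : 0 ≤ ∑ i, |u i - v i| := sum_nonneg fun i _ => abs_nonneg _
  obtain ⟨j, hj⟩ := exists_sum_abs_le_two_mul_card_mul (x := u - v)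
    (by simp [sum_sub_distrib, hu1, hv1])
  obtain ⟨k, hk⟩ := exists_sum_abs_le_two_mul_card_mul (x := v - u)
    (by simp [sum_sub_distrib, hu1, hv1])
  simp only [Pi.sub_apply, abs_sub_comm (v _)] at hj hk
  obtain ⟨m, hm⟩ := exists_sum_le_card_mul (u + v)
  simp only [Pi.add_apply, sum_add_distrib, hu1, hv1] at hm
  rcases le_total (v m) (u m) with hvu | huv
  · exact ⟨m, k, le_two_mul_sq_mul_minor (by nlinarith) hvu (hu k) hD hk⟩
  · refine ⟨j, m, ?_⟩
    linarith [le_two_mul_sq_mul_minor (by nlinarith) huv (hv j) hD hj]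

/-- Klopp's determinant lemma: for nonnegative vectors `u, v` with `‖u‖₁ = ‖v‖₁ = 1`,
some 2×2 minor squared is at least `‖u − v‖₁² / (4 n⁵)`. -/
theorem stmt_1 (n : ℕ) (hn : 2 ≤ n) (u v : Fin n → ℝ)
    (hu : ∀ i, 0 ≤ u i) (hv : ∀ i, 0 ≤ v i)
    (hu1 : ∑ i, u i = 1) (hv1 : ∑ i, v i = 1) :
    ∃ j k : Fin n, j ≠ k ∧
      (∑ i, |u i - v i|) ^ 2 / (4 * (n : ℝ) ^ 5) ≤ (u j * v k - u k * v j) ^ 2 := by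
  have : Nonempty (Fin n) := ⟨⟨0, by omega⟩⟩
  obtain ⟨j, k, hjk⟩ := exists_sum_abs_sub_le_two_mul_card_sq_mul_abs_minor hu hv hu1 hv1
  rw [Fintype.card_fin] at hjk
  have hN : (1 : ℝ) ≤ n := by exact_mod_cast (by omega : 1 ≤ n)
  by_cases hne : j = k
  · -- the diagonal minor vanishes, forcing `‖u - v‖₁ = 0`, and then any pair will do
    subst hne
    refine ⟨⟨0, by omega⟩, ⟨1, by omega⟩, by simp [Fin.ext_iff], ?_⟩
    have hD : ∑ i, |u i - v i| = 0 :=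
      le_antisymm (by simpa [mul_comm] using hjk) (sum_nonneg fun i _ => abs_nonneg _)
    simp [hD, sq_nonneg]
  refine ⟨j, k, hne, ?_⟩
  have hD : 0 ≤ ∑ i, |u i - v i| := sum_nonneg fun i _ => abs_nonneg _
  rw [div_le_iff₀ (by positivity)]
  calc (∑ i, |u i - v i|) ^ 2 ≤ (2 * (n : ℝ) ^ 2 * |u j * v k - u k * v j|) ^ 2 :=
        pow_le_pow_left₀ hD hjk 2
    _ = (u j * v k - u k * v j) ^ 2 * (4 * (n : ℝ) ^ 4) := by rw [mul_pow, sq_abs]; ring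
    _ ≤ (u j * v k - u k * v j) ^ 2 * (4 * (n : ℝ) ^ 5) := by
      gcongr (_ : ℝ) * (4 * ?_)
      exact pow_le_pow_right₀ hN (by norm_num)
end

section
/- Let A be an n×n Hermitian matrix and P an orthogonal projection of rank r. Then the function t ↦ det(A + t P − E·I) is a polynomial in t of degree at most r. -/
/-!
Diagonalising `P` by a unitary `U` turns `det (t • P + M)` into `det (t • D + Uᴴ * M * U)` with `D`
diagonal carrying `rank P` nonzero entries. In the Leibniz expansion of the latter determinant,
each product picks up a factor `t` only from the columns where `D` is nonzero.
-/

open Polynomial Matrix Finset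

namespace Matrix

variable {n R : Type*} [Fintype n] [DecidableEq n] [CommRing R]

theorem eval_det_X_smul_add_C (P B : Matrix n n R) (t : R) :
    eval t (det ((X : R[X]) • P.map C + B.map C)) = det (t • P + B) := by
  rw [← coe_evalRingHom, RingHom.map_det]
  congr 1
  ext i j
  simp [smul_eq_mul, mul_comm t]

theorem natDegree_det_X_smul_add_C_le (P B : Matrix n n R) (S : Finset n)
    (hS : ∀ i j, j ∉ S → P i j = 0) :
    natDegree (det ((X : R[X]) • P.map C + B.map C)) ≤ #S := by
  rw [det_apply]
  refine natDegree_sum_le_of_forall_le _ _ fun σ _ => ?_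
  rw [Units.smul_def, zsmul_eq_mul]
  refine natDegree_mul_le.trans ?_
  rw [natDegree_intCast, zero_add]
  refine (natDegree_prod_le _ _).trans ?_
  calc ∑ j, natDegree (((X : R[X]) • P.map C + B.map C) (σ j) j)
      ≤ ∑ j, if j ∈ S then 1 else 0 := by
        refine sum_le_sum fun j _ => ?_
        simp only [add_apply, smul_apply, map_apply, smul_eq_mul]
        split_ifs with hj
        · compute_degree
        · simp [hS _ _ hj]
    _ = #S := by simp

theorem natDegree_det_X_smul_diagonal_add_C_le (d : n → R) (B : Matrix n n R) (S : Finset n)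
    (hS : ∀ i ∉ S, d i = 0) :
    natDegree (det ((X : R[X]) • (diagonal d).map C + B.map C)) ≤ #S :=
  natDegree_det_X_smul_add_C_le _ _ _ fun i j hj => by
    by_cases hij : i = j
    · simp [hij, hS j hj]
    · exact diagonal_apply_ne _ hij

theorem det_conjStarAlgAut [StarRing R] (u : unitary (Matrix n n R)) (M : Matrix n n R) :
    det (Unitary.conjStarAlgAut R _ u M) = det M := by
  rw [Unitary.conjStarAlgAut_apply, det_mul_right_comm, Unitary.mul_star_self_of_mem u.2, one_mul]

end Matrix

namespace Matrix.IsHermitian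

variable {n 𝕜 : Type*} [Fintype n] [DecidableEq n] [RCLike 𝕜]

theorem det_smul_add_eq {P : Matrix n n 𝕜} (hP : P.IsHermitian) (M : Matrix n n 𝕜) (t : 𝕜) :
    det (t • P + M) = det (t • diagonal (RCLike.ofReal ∘ hP.eigenvalues)
      + Unitary.conjStarAlgAut 𝕜 _ (star hP.eigenvectorUnitary) M) := by
  rw [← conjStarAlgAut_star_eigenvectorUnitary, ← map_smul, ← map_add, det_conjStarAlgAut]

theorem exists_natDegree_le_rank_eval_eq_det {P : Matrix n n 𝕜} (hP : P.IsHermitian)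
    (M : Matrix n n 𝕜) :
    ∃ p : 𝕜[X], p.natDegree ≤ P.rank ∧ ∀ t, det (t • P + M) = p.eval t := by
  set d : n → 𝕜 := RCLike.ofReal ∘ hP.eigenvalues
  set B := Unitary.conjStarAlgAut 𝕜 _ (star hP.eigenvectorUnitary) M
  refine ⟨det ((X : 𝕜[X]) • (diagonal d).map C + B.map C), ?_, fun t => ?_⟩
  · rw [hP.rank_eq_card_non_zero_eigs, Fintype.card_subtype]
    exact natDegree_det_X_smul_diagonal_add_C_le d B _ fun i hi => by simpa [d] using hi
  · rw [eval_det_X_smul_add_C, hP.det_smul_add_eq]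

end Matrix.IsHermitian

theorem stmt_8_general (n : ℕ) (A P : Matrix (Fin n) (Fin n) ℂ)
    (hPsa : Pᴴ = P)
    (r : ℕ) (hr : P.rank = r) (E : ℝ) :
    ∃ p : Polynomial ℂ, p.natDegree ≤ r ∧
      ∀ t : ℝ, (A + (t : ℂ) • P - (E : ℂ) • (1 : Matrix (Fin n) (Fin n) ℂ)).det
        = p.eval (t : ℂ) := by
  obtain ⟨p, hdeg, heval⟩ :=
    Matrix.IsHermitian.exists_natDegree_le_rank_eval_eq_det hPsa (A - (E : ℂ) • 1)
  refine ⟨p, hr ▸ hdeg, fun t => ?_⟩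
  rw [← heval, add_sub_right_comm, add_comm]

/-- For a Hermitian matrix `A` and an orthogonal projection `P` of rank `r`,
`t ↦ det(A + t P − E·I)` is a polynomial of degree at most `r`. -/
theorem stmt_8 (n : ℕ) (A P : Matrix (Fin n) (Fin n) ℂ)
    (hA : A.IsHermitian) (hPidem : P * P = P) (hPsa : Pᴴ = P)
    (r : ℕ) (hr : P.rank = r) (E : ℝ) :
    ∃ p : Polynomial ℂ, p.natDegree ≤ r ∧
      ∀ t : ℝ, (A + (t : ℂ) • P - (E : ℂ) • (1 : Matrix (Fin n) (Fin n) ℂ)).det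
        = p.eval (t : ℂ) :=
  stmt_8_general n A P hPsa r hr E
end
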